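/- arXiv:2310.19507 — 2 statements merged into one kernel-verified Lean document; each statement's English description precedes it below -/
import Mathlib

section
/- Every label occurring in some firing sequence of the global composed Petri net Σ also occurs in some firing sequence of the subnet Σ^Λ obtained by composing only those agents whose alphabet intersects Λ, for any set of labels Λ containing that label. Equivalently: the projection of any firing sequence of Σ onto the transitions belonging to the agents composing Σ^Λ is a firing sequence of Σ^Λ (projection lemma / necessary condition for 1-liveness). -/
/-- A Petri net system: places `P`, transitions `T`, flow relation encoded by
presets and postsets, and an initial marking. -/
structure PetriNet (P T : Type*) where
  pre : T → Set P
  post : T → Set P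
  m0 : P → ℕ

namespace PetriNet

variable {P T : Type*}

def enabled (N : PetriNet P T) (m : P → ℕ) (t : T) : Prop :=
  ∀ p ∈ N.pre t, 1 ≤ m p

open Classical in
noncomputable def fire (N : PetriNet P T) (m : P → ℕ) (t : T) : P → ℕ :=
  fun p =>
    if p ∈ N.pre t ∧ p ∉ N.post t then m p - 1
    else if p ∈ N.post t ∧ p ∉ N.pre t then m p + 1
    else m p

def step (N : PetriNet P T) (m m' : P → ℕ) : Prop :=
  ∃ t, N.enabled m t ∧ m' = N.fire m t

def Reachable (N : PetriNet P T) (m : P → ℕ) : Prop :=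
  Relation.ReflTransGen N.step N.m0 m

def OneSafe (N : PetriNet P T) : Prop :=
  ∀ m, N.Reachable m → ∀ p, m p ≤ 1

/-- `t` is 1-live if some reachable marking enables it. -/
def OneLive (N : PetriNet P T) (t : T) : Prop :=
  ∃ m, N.Reachable m ∧ N.enabled m t

/-- The list of transitions `l` is a firing sequence from marking `m`. -/
def firesFrom (N : PetriNet P T) : (P → ℕ) → List T → Prop
  | _, [] => True
  | m, t :: ts => N.enabled m t ∧ N.firesFrom (N.fire m t) ts

end PetriNet

/-- A state-machine agent net: each transition has a single input place
(its source) and a single output place (its target), and carries a label. -/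
structure Agent (Pl Tr Λ : Type*) where
  src : Tr → Pl
  tgt : Tr → Pl
  lab : Tr → Λ
  init : Pl

namespace Agent

variable {I Λ : Type*} {Pl Tr : I → Type*}

/-- A legal component of a global transition with label `α` in an agent:
either a transition of the agent labelled `α`, or no component when the
agent's alphabet does not contain `α`. -/
def GoodComp {P T : Type*} (A : Agent P T Λ) (α : Λ) : Option T → Prop
  | some t => A.lab t = α
  | none => ¬ ∃ t : T, A.lab t = α

/-- A global transition of the fusion-composition of the agents indexed by
`S`: a label together with, for each participating agent whose alphabet
contains the label, one transition of that agent with this label (and no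
component for the other agents). -/
def GTrans (A : ∀ i, Agent (Pl i) (Tr i) Λ) (S : Set I) : Type _ :=
  {q : Λ × (∀ i, Option (Tr i)) //
    ∀ i, (i ∈ S → (A i).GoodComp q.1 (q.2 i)) ∧ (i ∉ S → q.2 i = none)}

open Classical in
/-- The fusion-composition of the agents indexed by `S`: places are the
(disjoint) places of the agents, transitions are the global transitions,
presets/postsets are the unions of the componentwise ones, and the initial
marking puts one token on each participating agent's initial place. -/
noncomputable def GlobalNet (A : ∀ i, Agent (Pl i) (Tr i) Λ) (S : Set I) :
    PetriNet (Σ i, Pl i) (GTrans A S) where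
  pre q := {p : Σ i, Pl i | ∃ t : Tr p.1, q.1.2 p.1 = some t ∧ (A p.1).src t = p.2}
  post q := {p : Σ i, Pl i | ∃ t : Tr p.1, q.1.2 p.1 = some t ∧ (A p.1).tgt t = p.2}
  m0 := fun p => if p.1 ∈ S ∧ p.2 = (A p.1).init then 1 else 0

/-- The set of agents whose alphabet intersects a set of labels `Λs`. -/
def agentsOf (A : ∀ i, Agent (Pl i) (Tr i) Λ) (Λs : Set Λ) : Set I :=
  {i | ∃ t : Tr i, (A i).lab t ∈ Λs}

open Classical in
/-- The projection of a global transition of the full composition onto the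
subnet composed of the agents in `S`: the subtuple of the components
belonging to agents in `S`. -/
noncomputable def projT (A : ∀ i, Agent (Pl i) (Tr i) Λ) (S : Set I)
    (q : GTrans A Set.univ) : GTrans A S :=
  ⟨(q.1.1, fun i => if i ∈ S then q.1.2 i else none), by
    intro i
    constructor
    · intro hi
      simp only [hi, if_pos]
      exact ((q.2 i).1 (Set.mem_univ i))
    · intro hi
      simp [hi]⟩

open Classical in
/-- The projection of a firing sequence of the full composition onto the
subnet composed of the agents in `S`: transitions with no component in the
agents of `S` are skipped, the rest are restricted to their `S`-components. -/
noncomputable def projSeq (A : ∀ i, Agent (Pl i) (Tr i) Λ) (S : Set I)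
    (l : List (GTrans A Set.univ)) : List (GTrans A S) :=
  (l.filter (fun q => decide (∃ i ∈ S, (q.1.2 i).isSome))).map (projT A S)

end Agent

section Aux

open Agent

variable {I Λ : Type*} {Pl Tr : I → Type*}

open Classical in
noncomputable def mproj (S : Set I) (m : (Σ i, Pl i) → ℕ) : (Σ i, Pl i) → ℕ :=
  fun p => if p.1 ∈ S then m p else 0

lemma mem_pre_projT (A : ∀ i, Agent (Pl i) (Tr i) Λ) (S : Set I)
    (q : GTrans A Set.univ) (p : Σ i, Pl i) :
    p ∈ (GlobalNet A S).pre (projT A S q) ↔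
      p.1 ∈ S ∧ p ∈ (GlobalNet A Set.univ).pre q := by
  simp only [GlobalNet, projT, Set.mem_setOf_eq]
  by_cases h : p.1 ∈ S <;> simp [h]

lemma mem_post_projT (A : ∀ i, Agent (Pl i) (Tr i) Λ) (S : Set I)
    (q : GTrans A Set.univ) (p : Σ i, Pl i) :
    p ∈ (GlobalNet A S).post (projT A S q) ↔
      p.1 ∈ S ∧ p ∈ (GlobalNet A Set.univ).post q := by
  simp only [GlobalNet, projT, Set.mem_setOf_eq]
  by_cases h : p.1 ∈ S <;> simp [h]

lemma mproj_fire (A : ∀ i, Agent (Pl i) (Tr i) Λ) (S : Set I)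
    (q : GTrans A Set.univ) (m : (Σ i, Pl i) → ℕ) :
    mproj S ((GlobalNet A Set.univ).fire m q)
      = (GlobalNet A S).fire (mproj S m) (projT A S q) := by
  funext p
  by_cases h : p.1 ∈ S
  · simp only [mproj, PetriNet.fire, mem_pre_projT, mem_post_projT, h, true_and, if_pos]
    by_cases h1 : p ∈ (GlobalNet A Set.univ).pre q <;>
      by_cases h2 : p ∈ (GlobalNet A Set.univ).post q <;>
      simp [h1, h2, h, mproj, mem_pre_projT, mem_post_projT]
  · have h1 : p ∉ (GlobalNet A S).pre (projT A S q) := by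
      rw [mem_pre_projT]; tauto
    have h2 : p ∉ (GlobalNet A S).post (projT A S q) := by
      rw [mem_post_projT]; tauto
    simp [mproj, PetriNet.fire, h, h1, h2]

lemma mproj_fire_skip (A : ∀ i, Agent (Pl i) (Tr i) Λ) (S : Set I)
    (q : GTrans A Set.univ) (m : (Σ i, Pl i) → ℕ)
    (hq : ∀ i ∈ S, q.1.2 i = none) :
    mproj S ((GlobalNet A Set.univ).fire m q) = mproj S m := by
  funext p
  by_cases h : p.1 ∈ S
  · have hn := hq p.1 h
    have h1 : p ∉ (GlobalNet A Set.univ).pre q := by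
      simp [GlobalNet, hn]
    have h2 : p ∉ (GlobalNet A Set.univ).post q := by
      simp [GlobalNet, hn]
    simp [mproj, PetriNet.fire, h, h1, h2]
  · simp [mproj, h]

lemma enabled_projT (A : ∀ i, Agent (Pl i) (Tr i) Λ) (S : Set I)
    (q : GTrans A Set.univ) (m : (Σ i, Pl i) → ℕ)
    (hen : (GlobalNet A Set.univ).enabled m q) :
    (GlobalNet A S).enabled (mproj S m) (projT A S q) := by
  intro p hp
  rw [mem_pre_projT] at hp
  have := hen p hp.2
  simpa [mproj, hp.1] using this

lemma mproj_m0 (A : ∀ i, Agent (Pl i) (Tr i) Λ) (S : Set I) :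
    mproj S (GlobalNet A Set.univ).m0 = (GlobalNet A S).m0 := by
  funext p
  by_cases h : p.1 ∈ S <;> by_cases h2 : p.2 = (A p.1).init <;>
    simp [mproj, GlobalNet, h, h2]

lemma fires_proj (A : ∀ i, Agent (Pl i) (Tr i) Λ) (S : Set I) :
    ∀ (l : List (GTrans A Set.univ)) (m : (Σ i, Pl i) → ℕ),
    (GlobalNet A Set.univ).firesFrom m l →
    (GlobalNet A S).firesFrom (mproj S m) (projSeq A S l) := by
  intro l
  induction l with
  | nil => intro m _; trivial
  | cons q ts ih =>
    intro m hm
    obtain ⟨hen, hrest⟩ := hm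
    by_cases hq : ∃ i ∈ S, (q.1.2 i).isSome
    · have : projSeq A S (q :: ts) = projT A S q :: projSeq A S ts := by
        simp [projSeq, List.filter_cons, hq]
      rw [this]
      refine ⟨enabled_projT A S q m hen, ?_⟩
      rw [← mproj_fire]
      exact ih _ hrest
    · have : projSeq A S (q :: ts) = projSeq A S ts := by
        simp [projSeq, List.filter_cons, hq]
      rw [this]
      have hnone : ∀ i ∈ S, q.1.2 i = none := by
        intro i hi
        by_contra hn
        exact hq ⟨i, hi, Option.isSome_iff_ne_none.mpr hn⟩
      have := ih _ hrest
      rwa [mproj_fire_skip A S q m hnone] at this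

end Aux

open Agent in
/-- Projection lemma: the projection of any firing sequence of the global
composition `Σ` onto the agents composing `Σ^Λ` (those whose alphabet
intersects `Λ`) is a firing sequence of `Σ^Λ`; consequently, every label of
`Λ` occurring in some firing sequence of `Σ` also occurs in some firing
sequence of `Σ^Λ`. -/
theorem projection_firing_sequence
    {I Λ : Type*} {Pl Tr : I → Type*} (A : ∀ i, Agent (Pl i) (Tr i) Λ)
    (Λs : Set Λ) (l : List (GTrans A Set.univ))
    (hl : (GlobalNet A Set.univ).firesFrom (GlobalNet A Set.univ).m0 l) :
    (GlobalNet A (agentsOf A Λs)).firesFrom (GlobalNet A (agentsOf A Λs)).m0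
        (projSeq A (agentsOf A Λs) l) ∧
    ∀ α ∈ Λs, (∃ q ∈ l, q.1.1 = α) →
      ∃ l' : List (GTrans A (agentsOf A Λs)),
        (GlobalNet A (agentsOf A Λs)).firesFrom (GlobalNet A (agentsOf A Λs)).m0 l' ∧
        ∃ q' ∈ l', q'.1.1 = α := by
  have S := agentsOf A Λs
  constructor
  · have := fires_proj A (agentsOf A Λs) l (GlobalNet A Set.univ).m0 hl
    rwa [mproj_m0] at this
  · intro α hα ⟨q, hq, hqα⟩
    by_cases hex : ∃ i, ∃ t : Tr i, (A i).lab t = α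
    · obtain ⟨i, t, ht⟩ := hex
      have hiS : i ∈ agentsOf A Λs := ⟨t, ht ▸ hα⟩
      refine ⟨projSeq A (agentsOf A Λs) l, ?_, projT A (agentsOf A Λs) q, ?_, hqα⟩
      · have := fires_proj A (agentsOf A Λs) l (GlobalNet A Set.univ).m0 hl
        rwa [mproj_m0] at this
      · have hsome : (q.1.2 i).isSome := by
          have hg := (q.2 i).1 (Set.mem_univ i)
          cases hc : q.1.2 i with
          | none => rw [hc] at hg; exact absurd ⟨t, hqα ▸ ht⟩ hg
          | some u => rfl
        refine List.mem_map.mpr ⟨q, List.mem_filter.mpr ⟨hq, ?_⟩, rfl⟩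
        simpa using ⟨i, hiS, hsome⟩
    · push_neg at hex
      refine ⟨[⟨(α, fun _ => none), fun i => ⟨fun _ hc => hc.elim (fun t ht => hex i t ht), fun _ => rfl⟩⟩], ⟨?_, trivial⟩, _, List.mem_singleton.mpr rfl, rfl⟩
      intro p hp
      simp [GlobalNet] at hp
end

section
/- Let π = t_1 ... t_k be a firing sequence of the subnet Σ^{λ(π)}, where λ(π) is the set of labels of transitions in π, and where Σ^{λ(π)} contains all agents whose alphabets intersect λ(π). Assume moreover that for each transition t_i in π, its preset and postset in the full composition Σ coincide with those in Σ^{λ(π)}. Then π (identified with the corresponding transitions of Σ) is a firing sequence of Σ. -/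
/-!
The markings reached in `Σ` and in `Σ^{λ(π)}` along `π` agree on the places of the agents of
`Σ^{λ(π)}`: initially both carry one token on each such agent's initial place, and corresponding
transitions, having the same presets and postsets, change these places in the same way. Every
preset of `Σ^{λ(π)}` lies among these places, so each step enabled there is enabled in `Σ`.
-/

namespace PetriNet

variable {P T T' : Type*} {N : PetriNet P T} {N' : PetriNet P T'}

theorem enabled_of_eqOn {U : Set P} {m m' : P → ℕ} {t : T} {t' : T'}
    (hpre : N.pre t = N'.pre t') (hU : N'.pre t' ⊆ U) (hm : Set.EqOn m m' U)
    (h : N'.enabled m' t') : N.enabled m t := by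
  intro p hp
  rw [hpre] at hp
  rw [hm (hU hp)]
  exact h p hp

/-- The token count of a place after firing depends only on its count before and on whether it
lies in the preset and postset, so agreement on any set of places is preserved. -/
theorem eqOn_fire {U : Set P} {m m' : P → ℕ} {t : T} {t' : T'}
    (hpre : N.pre t = N'.pre t') (hpost : N.post t = N'.post t') (hm : Set.EqOn m m' U) :
    Set.EqOn (N.fire m t) (N'.fire m' t') U := by
  intro p hp
  unfold fire
  rw [hpre, hpost, hm hp]

theorem firesFrom_of_firesFrom_map (f : T → T') (U : Set P) {l : List T}
    (hflow : ∀ t ∈ l, N.pre t = N'.pre (f t) ∧ N.post t = N'.post (f t))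
    (hU : ∀ t, N'.pre (f t) ⊆ U) {m m' : P → ℕ} (hm : Set.EqOn m m' U)
    (h : N'.firesFrom m' (l.map f)) : N.firesFrom m l := by
  induction l generalizing m m' with
  | nil => trivial
  | cons t l ih =>
    obtain ⟨hpre, hpost⟩ := hflow t List.mem_cons_self
    obtain ⟨hen, hrest⟩ := h
    exact ⟨enabled_of_eqOn hpre (hU t) hm hen,
      ih (fun t' ht' => hflow t' (List.mem_cons_of_mem _ ht')) (eqOn_fire hpre hpost hm) hrest⟩

end PetriNet

namespace Agent

variable {I Λ : Type*} {Pl Tr : I → Type*} (A : ∀ i, Agent (Pl i) (Tr i) Λ)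

theorem GlobalNet.pre_subset (S : Set I) (q : GTrans A S) :
    (GlobalNet A S).pre q ⊆ {p | p.1 ∈ S} := by
  rintro p ⟨t, ht, -⟩
  by_contra hp
  rw [(q.2 p.1).2 hp] at ht
  cases ht

theorem GlobalNet.m0_eqOn {S S' : Set I} (hS : S ⊆ S') :
    Set.EqOn (GlobalNet A S').m0 (GlobalNet A S).m0 {p | p.1 ∈ S} := by
  intro p (hp : p.1 ∈ S)
  classical
  exact if_congr (and_congr_left' (iff_of_true (hS hp) hp)) rfl rfl

end Agent

open Agent in
theorem lift_firing_sequence_general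
    {I Λ : Type*} {Pl Tr : I → Type*} (A : ∀ i, Agent (Pl i) (Tr i) Λ)
    (Λs : Set Λ) (πJ : List (GTrans A (agentsOf A Λs)))
    (hfire : (GlobalNet A (agentsOf A Λs)).firesFrom
        (GlobalNet A (agentsOf A Λs)).m0 πJ)
    (πG : List (GTrans A Set.univ))
    (hproj : πG.map (projT A (agentsOf A Λs)) = πJ)
    (hpre : ∀ q ∈ πG,
      (GlobalNet A Set.univ).pre q =
        (GlobalNet A (agentsOf A Λs)).pre (projT A (agentsOf A Λs) q) ∧
      (GlobalNet A Set.univ).post q =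
        (GlobalNet A (agentsOf A Λs)).post (projT A (agentsOf A Λs) q)) :
    (GlobalNet A Set.univ).firesFrom (GlobalNet A Set.univ).m0 πG := by
  subst hproj
  exact PetriNet.firesFrom_of_firesFrom_map _ _ hpre
    (fun q => GlobalNet.pre_subset A _ _) (GlobalNet.m0_eqOn A (Set.subset_univ _)) hfire

open Agent in
/-- Let `π` be a firing sequence of the subnet `Σ^{λ(π)}` composed of all
agents whose alphabets intersect the set `λ(π)` of labels of `π`. If the
corresponding transitions of the full composition `Σ` (those projecting to
`π` and having no component outside the chosen agents) have the same presets
and postsets in `Σ` as in `Σ^{λ(π)}`, then they form a firing sequence of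
`Σ`. -/
theorem lift_firing_sequence
    {I Λ : Type*} {Pl Tr : I → Type*} (A : ∀ i, Agent (Pl i) (Tr i) Λ)
    (Λs : Set Λ) (πJ : List (GTrans A (agentsOf A Λs)))
    (hlab : Λs = {α | ∃ q ∈ πJ, q.1.1 = α})
    (hfire : (GlobalNet A (agentsOf A Λs)).firesFrom
        (GlobalNet A (agentsOf A Λs)).m0 πJ)
    (πG : List (GTrans A Set.univ))
    (hproj : πG.map (projT A (agentsOf A Λs)) = πJ)
    (hnone : ∀ q ∈ πG, ∀ i, i ∉ agentsOf A Λs → q.1.2 i = none)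
    (hpre : ∀ q ∈ πG,
      (GlobalNet A Set.univ).pre q =
        (GlobalNet A (agentsOf A Λs)).pre (projT A (agentsOf A Λs) q) ∧
      (GlobalNet A Set.univ).post q =
        (GlobalNet A (agentsOf A Λs)).post (projT A (agentsOf A Λs) q)) :
    (GlobalNet A Set.univ).firesFrom (GlobalNet A Set.univ).m0 πG :=
  lift_firing_sequence_general A Λs πJ hfire πG hproj hpre
end
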